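/- arXiv:0906.0947 — 3 statements merged into one kernel-verified Lean document; each statement's English description precedes it below -/
import Mathlib

section
/- Let g be a Lie algebra with a ℤ^n-grading g = ⊕_{α∈ℤ^n} g_α such that g_0 is abelian, [g_α, g_β] = g_{α+β} for all α ≠ β, and the grading is the root space decomposition with respect to g_0. Let V be a simple weight g-module, λ ∈ supp(V), and set Λ̂ = (λ + ℤ^n) ∖ supp(V). Let μ_1,…,μ_k ∈ Λ̂ and a_1,…,a_k be positive real numbers with a_1 + ⋯ + a_k = 1, and suppose μ := a_1 μ_1 + ⋯ + a_k μ_k (a convex combination formed inside the real affine space containing the lattice coset λ + ℤ^n) lies in λ + ℤ^n. Then either μ = 0 (the zero weight) or μ ∈ Λ̂. -/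
/-! Preamble: `ℤⁿ`-graded Lie algebras whose grading is the root space
decomposition with respect to the abelian zero component, together with
weight modules, supports and related notions. -/

/-- The dot product `a · x` of a real vector with an integer vector. -/
def rdot {n : ℕ} (a : Fin n → ℝ) (x : Fin n → ℤ) : ℝ := ∑ i, a i * (x i : ℝ)

/-- A `ℤⁿ`-grading `g = ⊕ g_α` of a Lie algebra `g` over `k` such that `g₀` is
abelian, `[g_α, g_β] = g_{α+β}` for all `α ≠ β`, and the grading is the root
space decomposition of `g` with respect to `g₀` (which identifies `ℤⁿ` with a
subset of `g₀^*` via the injective additive map `wt`). -/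
structure GradedLie (k : Type*) [Field k] (n : ℕ)
    (g : Type*) [LieRing g] [LieAlgebra k g] where
  gr : (Fin n → ℤ) → Submodule k g
  isInternal : DirectSum.IsInternal gr
  bracket_le : ∀ (α β : Fin n → ℤ), ∀ x ∈ gr α, ∀ y ∈ gr β, ⁅x, y⁆ ∈ gr (α + β)
  bracket_eq : ∀ (α β : Fin n → ℤ), α ≠ β →
    Submodule.span k {z : g | ∃ x ∈ gr α, ∃ y ∈ gr β, z = ⁅x, y⁆} = gr (α + β)
  abelian : ∀ x ∈ gr 0, ∀ y ∈ gr 0, ⁅x, y⁆ = (0 : g)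
  wt : (Fin n → ℤ) → Module.Dual k ↥(gr 0)
  wt_injective : Function.Injective wt
  wt_add : ∀ α β : Fin n → ℤ, wt (α + β) = wt α + wt β
  rootSpace : ∀ α : Fin n → ℤ,
    (gr α : Set g) = {x : g | ∀ h : ↥(gr 0), ⁅(h : g), x⁆ = wt α h • x}

namespace GradedLie

variable {k : Type*} [Field k] {n : ℕ} {g : Type*} [LieRing g] [LieAlgebra k g]

variable (P : GradedLie k n g)
variable (V : Type*) [AddCommGroup V] [Module k V] [LieRingModule g V] [LieModule k g V]

/-- The weight space of `V` for the weight `lam ∈ g₀^*`. -/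
def weightSpace (lam : Module.Dual k ↥(P.gr 0)) : Submodule k V where
  carrier := {v : V | ∀ h : ↥(P.gr 0), ⁅(h : g), v⁆ = lam h • v}
  add_mem' := by
    intro u v hu hv h
    rw [lie_add, hu h, hv h, smul_add]
  zero_mem' := by intro h; rw [lie_zero, smul_zero]
  smul_mem' := by
    intro a v hv h
    rw [lie_smul, hv h, smul_comm]

/-- The support of `V`: weights with nonzero weight space. -/
def supp : Set (Module.Dual k ↥(P.gr 0)) := {lam | P.weightSpace V lam ≠ ⊥}

/-- `V` is a weight module: it is the sum of its weight spaces. -/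
def IsWeightModule : Prop :=
  ⨆ lam : Module.Dual k ↥(P.gr 0), P.weightSpace V lam = ⊤

/-- Dense: the support is a full coset `lam + ℤⁿ`. -/
def IsDense : Prop :=
  ∃ lam : Module.Dual k ↥(P.gr 0),
    P.supp V = {mu | ∃ x : Fin n → ℤ, mu = lam + P.wt x}

/-- Punctured: the support is `ℤⁿ ∖ {0}`. -/
def IsPunctured : Prop :=
  P.supp V = {mu | ∃ x : Fin n → ℤ, x ≠ 0 ∧ mu = P.wt x}

/-- Trivial module: one–dimensional with zero action. -/
def IsTrivialMod (_P : GradedLie k n g) : Prop :=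
  Module.rank k V = 1 ∧ ∀ (x : g) (v : V), ⁅x, v⁆ = 0

/-- Cut module: the support is contained in a shifted half space
`lam + b + ℤⁿ_{-0}^{(a)}`. -/
def IsCut : Prop :=
  ∃ lam ∈ P.supp V, ∃ a : Fin n → ℝ, a ≠ 0 ∧ ∃ b : Fin n → ℤ,
    ∀ mu ∈ P.supp V, ∃ x : Fin n → ℤ, rdot a x ≤ 0 ∧ mu = lam + P.wt b + P.wt x

/-- Generalized highest weight element with respect to a `ℤ`-basis `f` of `ℤⁿ`. -/
def IsGHW (f : Fin n → (Fin n → ℤ)) (v : V) : Prop :=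
  ∃ N : ℕ, ∀ m : Fin n → ℤ, (∀ i, (N : ℤ) < m i) →
    ∀ x ∈ P.gr (∑ i, m i • f i), ⁅x, v⁆ = 0

/-- Generalized highest weight element with respect to the standard basis of `ℤⁿ`:
`g_γ v = 0` whenever all `γ_i > N`. -/
def IsGHWstd (v : V) : Prop :=
  ∃ N : ℕ, ∀ γ : Fin n → ℤ, (∀ i, (N : ℤ) < γ i) →
    ∀ x ∈ P.gr γ, ⁅x, v⁆ = 0

/-- Mixed module: some weight space in the coset is infinite dimensional and
some is finite dimensional. -/
def IsMixed : Prop :=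
  ∃ lam ∈ P.supp V, ∃ x : Fin n → ℤ,
    ¬ Module.Finite k ↥(P.weightSpace V lam) ∧
      Module.Finite k ↥(P.weightSpace V (lam + P.wt x))

end GradedLie

/-! Suppose `μ = λ + y` is a weight of `V` and let `v` be a weight vector of weight `μ`. The
degrees `β` with `g_β v = 0` are closed under sums of distinct elements, because
`g_{β+γ} = [g_β, g_γ]`, and they contain every `xᵢ - y`, because `λ + xᵢ` is not a weight. The
relation `∑ aᵢ (xᵢ - y) = 0` with positive real `aᵢ` can be replaced by one with positive integer
coefficients, as the `xᵢ - y` are integral. Repeatedly merging two distinct summands of the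
resulting multiset of degrees summing to zero ends with a constant, hence zero, multiset; so
`g_0 v = 0`, which means `μ = 0`. -/

theorem exists_linearIndependent_rat_expansion {ι : Type*} [Finite ι] (a : ι → ℝ) :
    ∃ (d : ℕ) (e : Fin d → ℝ) (q : ι → Fin d → ℚ),
      LinearIndependent ℚ e ∧ ∀ i, a i = ∑ t, (q i t : ℝ) * e t := by
  let W := Submodule.span ℚ (Set.range a)
  have : FiniteDimensional ℚ W := FiniteDimensional.span_of_finite ℚ (Set.finite_range a)
  let B := Module.finBasis ℚ W
  refine ⟨_, fun t ↦ B t, fun i ↦ B.repr ⟨a i, Submodule.subset_span (Set.mem_range_self i)⟩,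
    B.linearIndependent.map' W.subtype W.ker_subtype, fun i ↦ ?_⟩
  set w : W := ⟨a i, Submodule.subset_span (Set.mem_range_self i)⟩
  calc a i = W.subtype (∑ t, B.repr w t • B t) := by rw [B.sum_repr]; rfl
    _ = _ := by simp only [map_sum, map_smul, Submodule.subtype_apply, Rat.smul_def]; rfl

theorem exists_pos_rat_of_pos_real {ι κ : Type*} [Fintype ι] (x : ι → κ → ℤ) {a : ι → ℝ}
    (hpos : ∀ i, 0 < a i) (ha : ∀ j, ∑ i, a i * x i j = 0) :
    ∃ b : ι → ℚ, (∀ i, 0 < b i) ∧ ∀ j, ∑ i, b i * x i j = 0 := by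
  obtain ⟨d, e, q, he, ha_eq⟩ := exists_linearIndependent_rat_expansion a
  -- The relations hold for each `ℚ`-coordinate of `a` separately, so every `r` replacing `e`
  -- gives a solution; near `e` it is positive, and it can be taken rational.
  have hq : ∀ j t, ∑ i, q i t * x i j = 0 := by
    intro j
    refine Fintype.linearIndependent_iff.mp he _ ?_
    simp_rw [Rat.smul_def]
    push_cast
    simp_rw [Finset.sum_mul]
    rw [Finset.sum_comm, ← ha j]
    refine Finset.sum_congr rfl fun i _ ↦ ?_
    rw [ha_eq i, Finset.sum_mul]
    exact Finset.sum_congr rfl fun t _ ↦ by ring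
  obtain ⟨r, hr⟩ : ∃ r : Fin d → ℚ, ∀ i, 0 < ∑ t, (q i t : ℝ) * r t := by
    have hopen : IsOpen {r : Fin d → ℝ | ∀ i, 0 < ∑ t, (q i t : ℝ) * r t} := by
      simp only [Set.ofPred_forall]
      exact isOpen_iInter_of_finite fun i ↦ isOpen_lt continuous_const (by fun_prop)
    exact (DenseRange.piMap fun _ ↦ Rat.denseRange_cast).exists_mem_open hopen
      ⟨e, fun i ↦ ha_eq i ▸ hpos i⟩
  refine ⟨fun i ↦ ∑ t, q i t * r t, fun i ↦ by exact_mod_cast hr i, fun j ↦ ?_⟩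
  calc ∑ i, (∑ t, q i t * r t) * x i j = ∑ t, r t * ∑ i, q i t * x i j := by
        simp_rw [Finset.sum_mul, Finset.mul_sum]
        rw [Finset.sum_comm]
        exact Finset.sum_congr rfl fun _ _ ↦ Finset.sum_congr rfl fun _ _ ↦ by ring
    _ = 0 := by simp [hq j]

theorem exists_pos_nat_of_pos_rat {ι κ : Type*} [Fintype ι] (x : ι → κ → ℤ) {b : ι → ℚ}
    (hpos : ∀ i, 0 < b i) (hb : ∀ j, ∑ i, b i * x i j = 0) :
    ∃ c : ι → ℕ, (∀ i, 0 < c i) ∧ ∑ i, c i • x i = 0 := by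
  have hint : ∀ i, ∃ m : ℕ, 0 < m ∧ (m : ℚ) = (∏ i, (b i).den : ℕ) * b i := by
    intro i
    obtain ⟨e, he⟩ := Finset.dvd_prod_of_mem (fun i ↦ (b i).den) (Finset.mem_univ i)
    have hnum : 0 < (b i).num := Rat.num_pos.mpr (hpos i)
    have he_pos : 0 < e := Nat.pos_of_ne_zero fun h ↦ by
      simp [h, Finset.prod_eq_zero_iff] at he
    refine ⟨(b i).num.toNat * e, Nat.mul_pos (by omega) he_pos, ?_⟩
    rw [he, Nat.cast_mul, Nat.cast_mul, ← Int.cast_natCast, Int.toNat_of_nonneg hnum.le,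
      ← Rat.mul_den_eq_num]
    ring
  choose c hcpos hc using hint
  refine ⟨c, hcpos, funext fun j ↦ ?_⟩
  have : ∑ i, (c i : ℚ) * x i j = 0 := by
    simp_rw [hc, mul_assoc, ← Finset.mul_sum, hb j, mul_zero]
  simpa [Finset.sum_apply] using (by exact_mod_cast this : ∑ i, (c i : ℤ) * x i j = 0)

theorem zero_mem_of_multiset_sum_eq_zero {M : Type*} [AddCommMonoid M] [IsAddTorsionFree M]
    {A : Set M} (hA : ∀ p ∈ A, ∀ q ∈ A, p ≠ q → p + q ∈ A) (s : Multiset M) (hs : s ≠ 0)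
    (hsA : ∀ z ∈ s, z ∈ A) (hsum : s.sum = 0) : (0 : M) ∈ A := by
  classical
  obtain ⟨p, hp⟩ := Multiset.exists_mem_of_ne_zero hs
  by_cases hconst : ∀ q ∈ s, q = p
  · rw [Multiset.eq_replicate_of_mem hconst, Multiset.sum_replicate,
      nsmul_eq_zero_iff_right (Multiset.card_pos.mpr hs).ne'] at hsum
    exact hsum ▸ hsA p hp
  push Not at hconst
  obtain ⟨q, hq, hqp⟩ := hconst
  have hs_eq : s = p ::ₘ q ::ₘ (s.erase p).erase q := by
    rw [Multiset.cons_erase ((Multiset.mem_erase_of_ne hqp).mpr hq), Multiset.cons_erase hp]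
  rw [hs_eq] at hsA hsum
  refine zero_mem_of_multiset_sum_eq_zero hA ((p + q) ::ₘ (s.erase p).erase q)
    Multiset.cons_ne_zero ?_ ?_
  · simp only [Multiset.mem_cons] at hsA ⊢
    rintro z (rfl | hz)
    · exact hA p (hsA p (.inl rfl)) q (hsA q (.inr (.inl rfl))) hqp.symm
    · exact hsA z (.inr (.inr hz))
  · rwa [Multiset.sum_cons, Multiset.sum_cons, ← add_assoc, ← Multiset.sum_cons] at hsum
termination_by Multiset.card s
decreasing_by rw [hs_eq]; simp

theorem zero_mem_of_sum_nsmul_eq_zero {M ι : Type*} [AddCommMonoid M] [IsAddTorsionFree M]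
    [Fintype ι] {A : Set M} (hA : ∀ p ∈ A, ∀ q ∈ A, p ≠ q → p + q ∈ A) {v : ι → M}
    (hvA : ∀ i, v i ∈ A) {c : ι → ℕ} (hc : ∃ i, c i ≠ 0) (hsum : ∑ i, c i • v i = 0) :
    (0 : M) ∈ A := by
  refine zero_mem_of_multiset_sum_eq_zero hA (Finset.univ.val.bind fun i ↦ .replicate (c i) (v i))
    ?_ ?_ ?_
  · obtain ⟨i, hi⟩ := hc
    exact ne_of_mem_of_not_mem' (Multiset.mem_bind.mpr ⟨i, Finset.mem_univ_val i,
      Multiset.mem_replicate.mpr ⟨hi, rfl⟩⟩) (Multiset.notMem_zero _)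
  · simp only [Multiset.mem_bind, Multiset.mem_replicate]
    rintro z ⟨i, -, -, rfl⟩
    exact hvA i
  · simpa [Multiset.sum_bind] using hsum

namespace GradedLie

variable {k : Type*} [Field k] {n : ℕ} {g : Type*} [LieRing g] [LieAlgebra k g]
  (P : GradedLie k n g) {V : Type*} [AddCommGroup V] [Module k V] [LieRingModule g V]
  [LieModule k g V]

theorem lie_mem_weightSpace {β : Fin n → ℤ} {u : g} (hu : u ∈ P.gr β)
    {μ : Module.Dual k ↥(P.gr 0)} {v : V} (hv : v ∈ P.weightSpace V μ) :
    ⁅u, v⁆ ∈ P.weightSpace V (μ + P.wt β) := by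
  intro h
  have hroot : ⁅(h : g), u⁆ = P.wt β h • u := by
    have hu' : u ∈ (P.gr β : Set g) := hu
    rw [P.rootSpace β] at hu'
    exact hu' h
  rw [leibniz_lie, hroot, hv h, smul_lie, lie_smul, LinearMap.add_apply, add_smul, add_comm]

variable (V) in
def annihilatingDegrees (v : V) : Set (Fin n → ℤ) := {β | ∀ u ∈ P.gr β, ⁅u, v⁆ = 0}

theorem add_mem_annihilatingDegrees {v : V} {β γ : Fin n → ℤ}
    (hβ : β ∈ P.annihilatingDegrees V v) (hγ : γ ∈ P.annihilatingDegrees V v) (hne : β ≠ γ) :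
    β + γ ∈ P.annihilatingDegrees V v := by
  intro u hu
  rw [← P.bracket_eq β γ hne] at hu
  induction hu using Submodule.span_induction with
  | mem z hz =>
    obtain ⟨x, hx, y, hy, rfl⟩ := hz
    rw [lie_lie, hβ x hx, hγ y hy, lie_zero, lie_zero, sub_zero]
  | zero => exact zero_lie v
  | add x y _ _ hx hy => rw [add_lie, hx, hy, add_zero]
  | smul c x _ hx => rw [smul_lie, hx, smul_zero]

theorem mem_annihilatingDegrees_of_add_notMem_supp {μ : Module.Dual k ↥(P.gr 0)} {v : V}
    (hv : v ∈ P.weightSpace V μ) {β : Fin n → ℤ} (hβ : μ + P.wt β ∉ P.supp V) :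
    β ∈ P.annihilatingDegrees V v := fun u hu ↦ by
  have hzero : P.weightSpace V (μ + P.wt β) = ⊥ := not_not.mp hβ
  simpa [hzero] using P.lie_mem_weightSpace hu hv

theorem eq_zero_of_zero_mem_annihilatingDegrees {μ : Module.Dual k ↥(P.gr 0)} {v : V}
    (hv : v ∈ P.weightSpace V μ) (hv0 : v ≠ 0) (h0 : 0 ∈ P.annihilatingDegrees V v) :
    μ = 0 :=
  LinearMap.ext fun h ↦ by
    have hact : μ h • v = 0 := (hv h).symm.trans (h0 h h.2)
    exact (smul_eq_zero.mp hact).resolve_right hv0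

end GradedLie

theorem graded_support_complement_convex_general
    (k : Type*) [Field k] (n : ℕ)
    (g : Type*) [LieRing g] [LieAlgebra k g] (P : GradedLie k n g)
    (V : Type*) [AddCommGroup V] [Module k V] [LieRingModule g V] [LieModule k g V]
    (lam : Module.Dual k ↥(P.gr 0))
    (N : ℕ) (hN : 0 < N) (x : Fin N → (Fin n → ℤ)) (a : Fin N → ℝ)
    (hx : ∀ i, lam + P.wt (x i) ∉ P.supp V)
    (hpos : ∀ i, 0 < a i) (hsum : ∑ i, a i = 1)
    (y : Fin n → ℤ) (hy : ∀ j : Fin n, (y j : ℝ) = ∑ i, a i * (x i j : ℝ)) :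
    lam + P.wt y = 0 ∨ lam + P.wt y ∉ P.supp V := by
  refine or_iff_not_imp_right.mpr fun hμ ↦ ?_
  obtain ⟨v, hv, hv0⟩ := (Submodule.ne_bot_iff _).mp (not_not.mp hμ)
  refine P.eq_zero_of_zero_mem_annihilatingDegrees hv hv0 ?_
  have hker : ∀ j, ∑ i, a i * ((x i - y) j : ℝ) = 0 := fun j ↦ by
    simp only [Pi.sub_apply, Int.cast_sub, mul_sub, Finset.sum_sub_distrib, ← Finset.sum_mul,
      hsum, ← hy, one_mul, sub_self]
  obtain ⟨b, hbpos, hb⟩ := exists_pos_rat_of_pos_real _ hpos hker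
  obtain ⟨c, hcpos, hc⟩ := exists_pos_nat_of_pos_rat _ hbpos hb
  refine zero_mem_of_sum_nsmul_eq_zero (fun β hβ γ hγ ↦ P.add_mem_annihilatingDegrees hβ hγ)
    (fun i ↦ P.mem_annihilatingDegrees_of_add_notMem_supp hv ?_) ⟨⟨0, hN⟩, (hcpos _).ne'⟩ hc
  simpa only [add_assoc, ← P.wt_add, add_sub_cancel] using hx i

/-- Convexity of the complement of the support: if `μ` is a
convex combination (inside `ℝⁿ`) of lattice points whose shifts by `λ` avoid the
support of a simple weight module `V`, and `μ` is a lattice point, then either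
`λ + μ` is the zero weight or `λ + μ` avoids the support as well. -/
theorem graded_support_complement_convex
    (k : Type*) [Field k] [IsAlgClosed k] [CharZero k] (n : ℕ) (hn : 0 < n)
    (g : Type*) [LieRing g] [LieAlgebra k g] (P : GradedLie k n g)
    (V : Type*) [AddCommGroup V] [Module k V] [LieRingModule g V] [LieModule k g V]
    (hsimple : IsSimpleOrder (LieSubmodule k g V))
    (hwt : P.IsWeightModule V)
    (lam : Module.Dual k ↥(P.gr 0)) (hlam : lam ∈ P.supp V)
    (N : ℕ) (hN : 0 < N) (x : Fin N → (Fin n → ℤ)) (a : Fin N → ℝ)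
    (hx : ∀ i, lam + P.wt (x i) ∉ P.supp V)
    (hpos : ∀ i, 0 < a i) (hsum : ∑ i, a i = 1)
    (y : Fin n → ℤ) (hy : ∀ j : Fin n, (y j : ℝ) = ∑ i, a i * (x i j : ℝ)) :
    lam + P.wt y = 0 ∨ lam + P.wt y ∉ P.supp V :=
  graded_support_complement_convex_general k n g P V lam N hN x a hx hpos hsum y hy
end

section
/- Let n be a positive integer, a ∈ ℝ^n, and β ∈ ℤ^n with a·β < 0. Then there exist elements β_1^+, β_1^−, …, β_n^+, β_n^− ∈ ℤ^n with a·β_i^± > 0 for all i, such that the set {β, β_1^+, β_1^−, …, β_n^+, β_n^−} generates ℤ^n as an additive semigroup; that is, every element of ℤ^n is a sum of elements of this set with nonnegative integer multiplicities (with at least one summand, or equivalently every element of ℤ^n is an ℕ-linear combination of these 2n+1 elements). -/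
/-! Put `c = -a·β > 0` and choose `M ∈ ℕ` with `M c > |aᵢ|` for all `i`. Then
`βᵢ^± = ±eᵢ - Mβ` satisfy `a·βᵢ^± = ±aᵢ + M c > 0`, and splitting `xᵢ = xᵢ⁺ - xᵢ⁻` gives
`x = ∑ xᵢ eᵢ = (M ∑ |xᵢ|) β + ∑ (xᵢ⁺ βᵢ^+ + xᵢ⁻ βᵢ^-)`. -/

section SemigroupIdentity

variable {G : Type*} [AddCommGroup G] {ι : Type*} [Fintype ι]

theorem toNat_zsmul_add_toNat_neg_zsmul (z : ℤ) (e v : G) :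
    (z.toNat : ℤ) • (e + v) + ((-z).toNat : ℤ) • (-e + v) = z • e + (z.natAbs : ℤ) • v := by
  have hsub : (z.toNat : ℤ) - ((-z).toNat : ℤ) = z := Int.toNat_sub_toNat_neg z
  have hadd : (z.toNat : ℤ) + ((-z).toNat : ℤ) = z.natAbs := by omega
  linear_combination (norm := module) hsub • e + hadd • v

theorem sum_zsmul_eq_natCast_zsmul_add_sum (β : G) (M : ℕ) (e : ι → G) (z : ι → ℤ) :
    ∑ i, z i • e i = ((M * ∑ i, (z i).natAbs : ℕ) : ℤ) • β +
      ∑ i, (((z i).toNat : ℤ) • (e i - (M : ℤ) • β) +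
        ((-z i).toNat : ℤ) • (-e i - (M : ℤ) • β)) := by
  simp_rw [sub_eq_add_neg, toNat_zsmul_add_toNat_neg_zsmul]
  rw [Finset.sum_add_distrib, ← Finset.sum_smul]
  push_cast
  module

end SemigroupIdentity

def rdotHom {n : ℕ} (a : Fin n → ℝ) : (Fin n → ℤ) →+ ℝ where
  toFun := rdot a
  map_zero' := by simp [rdot]
  map_add' x y := by simp [rdot, mul_add, Finset.sum_add_distrib]

theorem rdot_single {n : ℕ} (a : Fin n → ℝ) (i : Fin n) (t : ℤ) :
    rdot a (Pi.single i t) = a i * t := by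
  simp [rdot, Pi.single_apply]

theorem rdot_single_sub_zsmul {n : ℕ} (a : Fin n → ℝ) (β : Fin n → ℤ) (i : Fin n) (s m : ℤ) :
    rdot a (Pi.single i s - m • β) = s * a i - m * rdot a β := by
  change rdotHom a _ = s * a i - m * rdotHom a β
  rw [map_sub, map_zsmul, zsmul_eq_mul, mul_comm (s : ℝ)]
  exact congrArg (· - _) (rdot_single a i s)

theorem exists_nat_abs_lt_mul {ι : Type*} [Fintype ι] (a : ι → ℝ) {c : ℝ} (hc : 0 < c) :
    ∃ M : ℕ, ∀ i, |a i| < M * c := by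
  obtain ⟨M, hM⟩ := exists_nat_gt ((∑ i, |a i|) / c)
  refine ⟨M, fun i => ?_⟩
  calc |a i| ≤ ∑ j, |a j| :=
        Finset.single_le_sum (fun j _ => abs_nonneg (a j)) (Finset.mem_univ i)
    _ < M * c := (div_lt_iff₀ hc).mp hM

theorem lattice_semigroup_generators_general (n : ℕ)
    (a : Fin n → ℝ) (β : Fin n → ℤ) (hβ : rdot a β < 0) :
    ∃ βp βm : Fin n → (Fin n → ℤ),
      (∀ i, 0 < rdot a (βp i)) ∧ (∀ i, 0 < rdot a (βm i)) ∧
      ∀ x : Fin n → ℤ, ∃ (b : ℕ) (bp bm : Fin n → ℕ),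
        x = (b : ℤ) • β + ∑ i, ((bp i : ℤ) • βp i + (bm i : ℤ) • βm i) := by
  obtain ⟨M, hM⟩ := exists_nat_abs_lt_mul a (neg_pos.mpr hβ)
  refine ⟨fun i => Pi.single i 1 - (M : ℤ) • β, fun i => -Pi.single i 1 - (M : ℤ) • β,
    fun i => ?_, fun i => ?_, fun x => ?_⟩
  · rw [rdot_single_sub_zsmul]
    have := (abs_lt.mp (hM i)).1
    push_cast
    linarith
  · simp only [← Pi.single_neg, rdot_single_sub_zsmul]
    have := (abs_lt.mp (hM i)).2
    push_cast
    linarith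
  · refine ⟨M * ∑ i, (x i).natAbs, fun i => (x i).toNat, fun i => (-x i).toNat, ?_⟩
    conv_lhs => rw [← Finset.univ_sum_single x]
    simpa only [← Pi.single_smul, smul_eq_mul, mul_one] using
      sum_zsmul_eq_natCast_zsmul_add_sum β M (fun i => Pi.single i 1) x

/-- If `a ∈ ℝⁿ` and `β ∈ ℤⁿ` satisfy `a·β < 0`, then there are
`β₁^±, …, β_n^± ∈ ℤⁿ` with `a·β_i^± > 0` such that `{β, β₁^±, …, β_n^±}`
generates `ℤⁿ` as a semigroup: every `x ∈ ℤⁿ` is an `ℕ`-linear combination of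
these `2n+1` elements. -/
theorem lattice_semigroup_generators (n : ℕ) (hn : 0 < n)
    (a : Fin n → ℝ) (β : Fin n → ℤ) (hβ : rdot a β < 0) :
    ∃ βp βm : Fin n → (Fin n → ℤ),
      (∀ i, 0 < rdot a (βp i)) ∧ (∀ i, 0 < rdot a (βm i)) ∧
      ∀ x : Fin n → ℤ, ∃ (b : ℕ) (bp bm : Fin n → ℕ),
        x = (b : ℤ) • β + ∑ i, ((bp i : ℤ) • βp i + (bm i : ℤ) • βm i) :=
  lattice_semigroup_generators_general n a β hβ
end

section
/- Let g be a Lie algebra with a ℤ^n-grading g = ⊕_{α∈ℤ^n} g_α such that g_0 is abelian, [g_α, g_β] = g_{α+β} for all α ≠ β, and the grading is the root space decomposition with respect to g_0. Let V be a simple weight g-module, λ ∈ supp(V), and set Λ̂ = (λ + ℤ^n) ∖ supp(V). Assume Λ̂ is nonempty and that there is a nonzero a ∈ ℝ^n with Λ̂ ⊆ λ + ℤ_{+}^{(a)} (equivalently, λ + x ∈ supp(V) for all x ∈ ℤ^n with a·x ≤ 0). Then for every β ∈ ℤ^n with a·β < 0 there exists μ ∈ supp(V) such that μ − β ∈ Λ̂.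 -/
/-! Walk from the missing weight `λ + z` in the direction `β`. Since `a·β < 0`, the walk
eventually enters the half space `a·x ≤ 0`, which lies in the support; the first step at which
it does so gives `μ = λ + z + mβ ∈ supp V` with `μ - β ∉ supp V`. -/

lemma rdot_add_nsmul {n : ℕ} (a : Fin n → ℝ) (z β : Fin n → ℤ) (m : ℕ) :
    rdot a (z + m • β) = rdot a z + m * rdot a β := by
  simp only [rdot, Finset.mul_sum, ← Finset.sum_add_distrib]
  refine Finset.sum_congr rfl fun i _ => ?_
  rw [Pi.add_apply, Pi.smul_apply, nsmul_eq_mul]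
  push_cast
  ring

lemma exists_rdot_add_nsmul_nonpos {n : ℕ} (a : Fin n → ℝ) (z : Fin n → ℤ) {β : Fin n → ℤ}
    (hβ : rdot a β < 0) : ∃ m : ℕ, rdot a (z + m • β) ≤ 0 := by
  obtain ⟨m, hm⟩ := exists_nat_ge (rdot a z / -rdot a β)
  rw [div_le_iff₀ (neg_pos.mpr hβ)] at hm
  exact ⟨m, by rw [rdot_add_nsmul]; linarith⟩

lemma exists_mem_sub_notMem_of_notMem_of_add_nsmul_mem {G : Type*} [AddGroup G] {S : Set G}
    {z β : G} (hz : z ∉ S) (hS : ∃ m : ℕ, z + m • β ∈ S) : ∃ y ∈ S, y - β ∉ S := by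
  obtain ⟨m, hm, hm1⟩ :=
    Nat.exists_not_and_succ_of_not_zero_of_exists (p := fun m : ℕ => z + m • β ∈ S)
      (by simpa using hz) hS
  refine ⟨z + (m + 1) • β, hm1, ?_⟩
  rwa [succ_nsmul, ← add_assoc, add_sub_cancel_right]

theorem graded_exists_boundary_weight_general
    (k : Type*) [Field k] (n : ℕ)
    (g : Type*) [LieRing g] [LieAlgebra k g] (P : GradedLie k n g)
    (V : Type*) [AddCommGroup V] [Module k V] [LieRingModule g V] [LieModule k g V]
    (lam : Module.Dual k ↥(P.gr 0))
    (a : Fin n → ℝ)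
    (hne : ∃ y : Fin n → ℤ, lam + P.wt y ∉ P.supp V)
    (hhalf : ∀ y : Fin n → ℤ, rdot a y ≤ 0 → lam + P.wt y ∈ P.supp V) :
    ∀ β : Fin n → ℤ, rdot a β < 0 →
      ∃ y : Fin n → ℤ, lam + P.wt y ∈ P.supp V ∧
        lam + P.wt (y - β) ∉ P.supp V := by
  intro β hβ
  obtain ⟨z, hz⟩ := hne
  have hreach : ∃ m : ℕ, lam + P.wt (z + m • β) ∈ P.supp V := by
    obtain ⟨m, hm⟩ := exists_rdot_add_nsmul_nonpos a z hβ
    exact ⟨m, hhalf _ hm⟩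
  exact exists_mem_sub_notMem_of_notMem_of_add_nsmul_mem
    (S := {y | lam + P.wt y ∈ P.supp V}) hz hreach

/-- Let `V` be a simple weight module whose support misses
some point of the coset `λ + ℤⁿ`, while containing all `λ + x` with `a·x ≤ 0`
for a fixed nonzero `a ∈ ℝⁿ`.  Then for every `β` with `a·β < 0` there is
`μ ∈ supp V` with `μ − β ∉ supp V`. -/
theorem graded_exists_boundary_weight
    (k : Type*) [Field k] [IsAlgClosed k] [CharZero k] (n : ℕ) (hn : 0 < n)
    (g : Type*) [LieRing g] [LieAlgebra k g] (P : GradedLie k n g)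
    (V : Type*) [AddCommGroup V] [Module k V] [LieRingModule g V] [LieModule k g V]
    (hsimple : IsSimpleOrder (LieSubmodule k g V))
    (hwt : P.IsWeightModule V)
    (lam : Module.Dual k ↥(P.gr 0)) (hlam : lam ∈ P.supp V)
    (a : Fin n → ℝ) (ha : a ≠ 0)
    (hne : ∃ y : Fin n → ℤ, lam + P.wt y ∉ P.supp V)
    (hhalf : ∀ y : Fin n → ℤ, rdot a y ≤ 0 → lam + P.wt y ∈ P.supp V) :
    ∀ β : Fin n → ℤ, rdot a β < 0 →
      ∃ y : Fin n → ℤ, lam + P.wt y ∈ P.supp V ∧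
        lam + P.wt (y - β) ∉ P.supp V :=
  graded_exists_boundary_weight_general k n g P V lam a hne hhalf
end
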